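/- arXiv:2007.11835 — 3 statements merged into one kernel-verified Lean document; each statement's English description precedes it below -/
import Mathlib

section
/- Under assumptions A2 and A3 (with x̃ ∈ S), and given a FOM solution x and any x̃ ∈ S, the following two-sided bound holds: max( max_{1≤i≤n_d} ‖PΩ_i(x − x̃)‖₂ , max_{1≤j≤n_p} ‖P̄^j(x − x̃)‖₂ ) ≤ ‖x − x̃‖₂ ≤ (1/(P·κℓ)) · ( Σ_{i=1}^{n_d} ‖B_i r_i(PΩ_i x̃, PΓ_i x̃)‖₂² )^{1/2}. -/
/-!
The lower bound holds because every `PΩᵢ` and `P̄ʲ` selects distinct coordinates, and dropping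
coordinates cannot increase a Euclidean norm. For the upper bound, A2 applied to `x̃` and the FOM
solution `x` (whose residuals vanish) gives `κℓ ‖x − x̃‖ ≤ ‖r(x̃)‖`, and A3 at `x̃ ∈ S` gives
`P ‖r(x̃)‖ ≤ ‖B r(x̃)‖`.
-/

open Matrix

/-- Euclidean norm of a vector in `ℝ^d`. -/
noncomputable def enormFin {d : ℕ} (v : Fin d → ℝ) : ℝ :=
  Real.sqrt (∑ j, v j ^ 2)

/-- Maximum of a real-valued family over `Fin k` (for `k > 0`). -/
noncomputable def finMax {k : ℕ} (hk : 0 < k) (f : Fin k → ℝ) : ℝ :=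
  Finset.univ.sup' (Finset.univ_nonempty_iff.mpr (Fin.pos_iff_nonempty.mp hk)) f

lemma enormFin_sub_comm {d : ℕ} (v w : Fin d → ℝ) : enormFin (v - w) = enormFin (w - v) := by
  unfold enormFin
  congr 1
  exact Finset.sum_congr rfl fun j _ => by simp only [Pi.sub_apply]; ring

lemma enormFin_comp_le_of_injective {k d : ℕ} {σ : Fin k → Fin d} (hσ : Function.Injective σ)
    (v : Fin d → ℝ) : enormFin (v ∘ σ) ≤ enormFin v := by
  unfold enormFin
  apply Real.sqrt_le_sqrt
  classical
  calc ∑ q, (v ∘ σ) q ^ 2 = ∑ j ∈ Finset.univ.image σ, v j ^ 2 :=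
        (Finset.sum_image (f := fun j => v j ^ 2) fun a _ b _ h => hσ h).symm
    _ ≤ ∑ j, v j ^ 2 := Finset.sum_le_univ_sum_of_nonneg fun j => sq_nonneg (v j)

lemma mulVec_eq_comp_of_rows_eq_single {k d : ℕ} {σ : Fin k → Fin d}
    {M : Matrix (Fin k) (Fin d) ℝ} (hM : ∀ q j, M q j = if j = σ q then 1 else 0)
    (v : Fin d → ℝ) : M *ᵥ v = v ∘ σ := by
  ext q
  simp [mulVec, dotProduct, hM]

lemma enormFin_mulVec_le_of_rows_eq_single {k d : ℕ} {σ : Fin k → Fin d}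
    (hσ : Function.Injective σ) {M : Matrix (Fin k) (Fin d) ℝ}
    (hM : ∀ q j, M q j = if j = σ q then 1 else 0) (v : Fin d → ℝ) :
    enormFin (M *ᵥ v) ≤ enormFin v := by
  rw [mulVec_eq_comp_of_rows_eq_single hM]
  exact enormFin_comp_le_of_injective hσ v

lemma finMax_le {k : ℕ} (hk : 0 < k) {f : Fin k → ℝ} {c : ℝ} (h : ∀ i, f i ≤ c) :
    finMax hk f ≤ c :=
  Finset.sup'_le _ f fun i _ => h i

theorem stmt0_general
    (n nd np : ℕ) (hnd : 0 < nd) (hnp : 0 < np)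
    (nΩ nΓ nr m : Fin nd → ℕ)
    (r : ∀ i : Fin nd, (Fin (nΩ i) → ℝ) → (Fin (nΓ i) → ℝ) → (Fin (nr i) → ℝ))
    (PΩ : ∀ i : Fin nd, Matrix (Fin (nΩ i)) (Fin n) ℝ)
    (PΓ : ∀ i : Fin nd, Matrix (Fin (nΓ i)) (Fin n) ℝ)
    (B : ∀ i : Fin nd, Matrix (Fin (m i)) (Fin (nr i)) ℝ)
    (σΩ : ∀ i : Fin nd, Fin (nΩ i) → Fin n)
    (hσΩinj : ∀ i, Function.Injective (σΩ i))
    (hPΩrows : ∀ i q j, PΩ i q j = if j = σΩ i q then 1 else 0)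
    -- port extraction matrices
    (nP : Fin np → ℕ)
    (Pbar : ∀ j : Fin np, Matrix (Fin (nP j)) (Fin n) ℝ)
    (σP : ∀ j : Fin np, Fin (nP j) → Fin n)
    (hσPinj : ∀ j, Function.Injective (σP j))
    (hPbarrows : ∀ j q l, Pbar j q l = if l = σP j q then 1 else 0)
    (S : Set (Fin n → ℝ))
    (κℓ P : ℝ) (hκℓ : 0 < κℓ) (hP : 0 < P)
    (hA2 : ∀ w y : Fin n → ℝ,
      Real.sqrt (∑ i, (enormFin (r i ((PΩ i).mulVec w) ((PΓ i).mulVec w)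
          - r i ((PΩ i).mulVec y) ((PΓ i).mulVec y))) ^ 2) ≥ κℓ * enormFin (w - y))
    (hA3 : ∀ w ∈ S,
      Real.sqrt (∑ i, (enormFin ((B i).mulVec (r i ((PΩ i).mulVec w) ((PΓ i).mulVec w)))) ^ 2)
        ≥ P * Real.sqrt (∑ i, (enormFin (r i ((PΩ i).mulVec w) ((PΓ i).mulVec w))) ^ 2))
    (x : Fin n → ℝ)
    (hx : ∀ i, r i ((PΩ i).mulVec x) ((PΓ i).mulVec x) = 0)
    (xt : Fin n → ℝ) (hxtS : xt ∈ S) :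
    max (finMax hnd fun i => enormFin ((PΩ i).mulVec (x - xt)))
        (finMax hnp fun j => enormFin ((Pbar j).mulVec (x - xt)))
      ≤ enormFin (x - xt) ∧
    enormFin (x - xt) ≤ (1 / (P * κℓ)) *
      Real.sqrt (∑ i, (enormFin ((B i).mulVec (r i ((PΩ i).mulVec xt) ((PΓ i).mulVec xt)))) ^ 2) := by
  refine ⟨max_le ?_ ?_, ?_⟩
  · exact finMax_le hnd fun i => enormFin_mulVec_le_of_rows_eq_single (hσΩinj i) (hPΩrows i) _
  · exact finMax_le hnp fun j => enormFin_mulVec_le_of_rows_eq_single (hσPinj j) (hPbarrows j) _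
  · have hstab := hA2 xt x
    simp only [hx, sub_zero, enormFin_sub_comm xt x] at hstab
    have hweighted : P * κℓ * enormFin (x - xt) ≤
        Real.sqrt (∑ i, (enormFin ((B i) *ᵥ (r i ((PΩ i) *ᵥ xt) ((PΓ i) *ᵥ xt)))) ^ 2) :=
      calc P * κℓ * enormFin (x - xt) = P * (κℓ * enormFin (x - xt)) := mul_assoc _ _ _
        _ ≤ P * Real.sqrt (∑ i, (enormFin (r i ((PΩ i) *ᵥ xt) ((PΓ i) *ᵥ xt))) ^ 2) :=
          mul_le_mul_of_nonneg_left hstab hP.le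
        _ ≤ _ := hA3 xt hxtS
    rw [one_div_mul_eq_div, le_div_iff₀ (mul_pos hP hκℓ), mul_comm]
    exact hweighted

/-- a posteriori error bound: under A2 and A3 (with `xt ∈ S`), for a FOM
solution `x` and any `xt ∈ S`,
`max(maxᵢ ‖PΩᵢ(x − xt)‖₂, maxⱼ ‖P̄ʲ(x − xt)‖₂) ≤ ‖x − xt‖₂
  ≤ (1/(P·κℓ))·(Σᵢ ‖Bᵢ rᵢ(PΩᵢ xt, PΓᵢ xt)‖₂²)^{1/2}`. -/
theorem stmt0
    (n nd np : ℕ) (hn : 0 < n) (hnd : 0 < nd) (hnp : 0 < np)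
    (nΩ nΓ nr m : Fin nd → ℕ)
    (r : ∀ i : Fin nd, (Fin (nΩ i) → ℝ) → (Fin (nΓ i) → ℝ) → (Fin (nr i) → ℝ))
    (PΩ : ∀ i : Fin nd, Matrix (Fin (nΩ i)) (Fin n) ℝ)
    (PΓ : ∀ i : Fin nd, Matrix (Fin (nΓ i)) (Fin n) ℝ)
    (B : ∀ i : Fin nd, Matrix (Fin (m i)) (Fin (nr i)) ℝ)
    (σΩ : ∀ i : Fin nd, Fin (nΩ i) → Fin n)
    (hσΩinj : ∀ i, Function.Injective (σΩ i))
    (hPΩrows : ∀ i q j, PΩ i q j = if j = σΩ i q then 1 else 0)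
    (σΓ : ∀ i : Fin nd, Fin (nΓ i) → Fin n)
    (hσΓinj : ∀ i, Function.Injective (σΓ i))
    (hPΓrows : ∀ i q j, PΓ i q j = if j = σΓ i q then 1 else 0)
    -- port extraction matrices
    (nP : Fin np → ℕ)
    (Pbar : ∀ j : Fin np, Matrix (Fin (nP j)) (Fin n) ℝ)
    (σP : ∀ j : Fin np, Fin (nP j) → Fin n)
    (hσPinj : ∀ j, Function.Injective (σP j))
    (hPbarrows : ∀ j q l, Pbar j q l = if l = σP j q then 1 else 0)
    -- row-index sets of `PΩ₁,…,PΩ_nd, P̄¹,…,P̄^np` are pairwise disjoint and cover `{1,…,n}`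
    (hdisjΩΩ : ∀ i i', i ≠ i' → Disjoint (Set.range (σΩ i)) (Set.range (σΩ i')))
    (hdisjPP : ∀ j j', j ≠ j' → Disjoint (Set.range (σP j)) (Set.range (σP j')))
    (hdisjΩP : ∀ i j, Disjoint (Set.range (σΩ i)) (Set.range (σP j)))
    (hcover : ∀ l : Fin n, (∃ i q, σΩ i q = l) ∨ (∃ j q, σP j q = l))
    (S : Set (Fin n → ℝ))
    (κℓ P : ℝ) (hκℓ : 0 < κℓ) (hP : 0 < P)
    (hA2 : ∀ w y : Fin n → ℝ,
      Real.sqrt (∑ i, (enormFin (r i ((PΩ i).mulVec w) ((PΓ i).mulVec w)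
          - r i ((PΩ i).mulVec y) ((PΓ i).mulVec y))) ^ 2) ≥ κℓ * enormFin (w - y))
    (hA3 : ∀ w ∈ S,
      Real.sqrt (∑ i, (enormFin ((B i).mulVec (r i ((PΩ i).mulVec w) ((PΓ i).mulVec w)))) ^ 2)
        ≥ P * Real.sqrt (∑ i, (enormFin (r i ((PΩ i).mulVec w) ((PΓ i).mulVec w))) ^ 2))
    (x : Fin n → ℝ)
    (hx : ∀ i, r i ((PΩ i).mulVec x) ((PΓ i).mulVec x) = 0)
    (xt : Fin n → ℝ) (hxtS : xt ∈ S) :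
    max (finMax hnd fun i => enormFin ((PΩ i).mulVec (x - xt)))
        (finMax hnp fun j => enormFin ((Pbar j).mulVec (x - xt)))
      ≤ enormFin (x - xt) ∧
    enormFin (x - xt) ≤ (1 / (P * κℓ)) *
      Real.sqrt (∑ i, (enormFin ((B i).mulVec (r i ((PΩ i).mulVec xt) ((PΓ i).mulVec xt)))) ^ 2) :=
  stmt0_general n nd np hnd hnp nΩ nΓ nr m r PΩ PΓ B σΩ hσΩinj hPΩrows nP Pbar σP hσPinj hPbarrows S
    κℓ P hκℓ hP hA2 hA3 x hx xt hxtS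
end

section
/- Under assumptions A2, A3 and A4, if x is a FOM solution and x̃ ∈ S minimizes the weighted residual objective w ↦ Σ_{i=1}^{n_d} ‖B_i r_i(PΩ_i w, PΓ_i w)‖₂² over S, then for every w ∈ S one has ‖x − x̃‖₂ ≤ (κu/(P·κℓ)) · ‖x − w‖₂; in particular ‖x − x̃‖₂ ≤ (κu/(P·κℓ)) · inf_{w ∈ S} ‖x − w‖₂. -/
/-!
A Céa-type argument. With `x` the FOM solution, A2 (applied at `y = x`, where every residual
vanishes) bounds the error `‖x - x̃‖` by the residual at `x̃` divided by `κℓ`; A3 bounds that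
residual by the weighted residual at `x̃` divided by `P`; minimality of `x̃` lets us replace `x̃`
by any `w ∈ S`; and A4 (again at `y = x`) bounds the weighted residual at `w` by `κu ‖x - w‖`.
-/

open Matrix

/-- Euclidean norm of a vector in `ℝ^d`. -/
noncomputable def enorm {d : ℕ} (v : Fin d → ℝ) : ℝ :=
  Real.sqrt (∑ j, v j ^ 2)

lemma enorm_sub_comm {d : ℕ} (a b : Fin d → ℝ) : _root_.enorm (a - b) = _root_.enorm (b - a) := by
  simp only [_root_.enorm, Pi.sub_apply, ← neg_sub (b _) (a _), neg_sq]

lemma err_le_of_weighted_residual_min {α : Type*} {S : Set α} {err res wres : α → ℝ}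
    {κℓ P κu : ℝ} (hκℓ : 0 < κℓ) (hP : 0 < P)
    (h_inv_lip : ∀ w, κℓ * err w ≤ res w) (h_equiv : ∀ w ∈ S, P * res w ≤ wres w)
    (h_lip : ∀ w, wres w ≤ κu * err w)
    {xt : α} (hxtS : xt ∈ S) (hmin : ∀ w ∈ S, wres xt ≤ wres w) :
    ∀ w ∈ S, err xt ≤ κu / (P * κℓ) * err w := by
  intro w hwS
  have hchain : P * κℓ * err xt ≤ κu * err w :=
    calc P * κℓ * err xt = P * (κℓ * err xt) := mul_assoc _ _ _
      _ ≤ P * res xt := mul_le_mul_of_nonneg_left (h_inv_lip xt) hP.le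
      _ ≤ wres xt := h_equiv xt hxtS
      _ ≤ wres w := hmin w hwS
      _ ≤ κu * err w := h_lip w
  rw [div_mul_eq_mul_div, le_div_iff₀ (by positivity), mul_comm]
  exact hchain

lemma le_mul_csInf_image {α : Type*} {S : Set α} (hS : S.Nonempty) {f : α → ℝ} {a c : ℝ}
    (hc : 0 < c) (h : ∀ w ∈ S, a ≤ c * f w) : a ≤ c * sInf (f '' S) := by
  rw [← div_le_iff₀' hc]
  refine le_csInf (hS.image f) ?_
  rintro _ ⟨w, hwS, rfl⟩
  rw [div_le_iff₀' hc]
  exact h w hwS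

theorem stmt1_general
    (n nd : ℕ)
    (nΩ nΓ nr m : Fin nd → ℕ)
    (r : ∀ i : Fin nd, (Fin (nΩ i) → ℝ) → (Fin (nΓ i) → ℝ) → (Fin (nr i) → ℝ))
    (PΩ : ∀ i : Fin nd, Matrix (Fin (nΩ i)) (Fin n) ℝ)
    (PΓ : ∀ i : Fin nd, Matrix (Fin (nΓ i)) (Fin n) ℝ)
    (B : ∀ i : Fin nd, Matrix (Fin (m i)) (Fin (nr i)) ℝ)
    (S : Set (Fin n → ℝ))
    (κℓ P κu : ℝ) (hκℓ : 0 < κℓ) (hP : 0 < P) (hκu : 0 < κu)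
    (hA2 : ∀ w y : Fin n → ℝ,
      Real.sqrt (∑ i, (_root_.enorm (r i ((PΩ i).mulVec w) ((PΓ i).mulVec w)
          - r i ((PΩ i).mulVec y) ((PΓ i).mulVec y))) ^ 2) ≥ κℓ * _root_.enorm (w - y))
    (hA3 : ∀ w ∈ S,
      Real.sqrt (∑ i, (_root_.enorm ((B i).mulVec (r i ((PΩ i).mulVec w) ((PΓ i).mulVec w)))) ^ 2)
        ≥ P * Real.sqrt (∑ i, (_root_.enorm (r i ((PΩ i).mulVec w) ((PΓ i).mulVec w))) ^ 2))
    (hA4 : ∀ w y : Fin n → ℝ,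
      Real.sqrt (∑ i, (_root_.enorm ((B i).mulVec (r i ((PΩ i).mulVec w) ((PΓ i).mulVec w))
          - (B i).mulVec (r i ((PΩ i).mulVec y) ((PΓ i).mulVec y)))) ^ 2)
        ≤ κu * _root_.enorm (w - y))
    (x : Fin n → ℝ)
    (hx : ∀ i, r i ((PΩ i).mulVec x) ((PΓ i).mulVec x) = 0)
    (xt : Fin n → ℝ) (hxtS : xt ∈ S)
    (hmin : ∀ w ∈ S,
      (∑ i, (_root_.enorm ((B i).mulVec (r i ((PΩ i).mulVec xt) ((PΓ i).mulVec xt)))) ^ 2)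
        ≤ ∑ i, (_root_.enorm ((B i).mulVec (r i ((PΩ i).mulVec w) ((PΓ i).mulVec w)))) ^ 2) :
    (∀ w ∈ S, _root_.enorm (x - xt) ≤ (κu / (P * κℓ)) * _root_.enorm (x - w)) ∧
      _root_.enorm (x - xt) ≤ (κu / (P * κℓ)) * sInf ((fun w => _root_.enorm (x - w)) '' S) := by
  have h_inv_lip : ∀ w, κℓ * _root_.enorm (x - w) ≤
      Real.sqrt (∑ i, (_root_.enorm (r i ((PΩ i).mulVec w) ((PΓ i).mulVec w))) ^ 2) := by
    intro w
    simpa only [hx, sub_zero, enorm_sub_comm w x] using hA2 w x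
  have h_lip : ∀ w,
      Real.sqrt (∑ i, (_root_.enorm ((B i).mulVec (r i ((PΩ i).mulVec w) ((PΓ i).mulVec w)))) ^ 2)
        ≤ κu * _root_.enorm (x - w) := by
    intro w
    simpa only [hx, mulVec_zero, sub_zero, enorm_sub_comm w x] using hA4 w x
  have quasi_opt := err_le_of_weighted_residual_min hκℓ hP h_inv_lip hA3 h_lip hxtS
    fun w hwS ↦ Real.sqrt_le_sqrt (hmin w hwS)
  exact ⟨quasi_opt, le_mul_csInf_image ⟨xt, hxtS⟩ (by positivity) quasi_opt⟩

/-- under A2, A3 and A4, if `x` is a FOM solution and `xt ∈ S` minimizes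
the weighted residual objective over `S`, then `‖x − xt‖₂ ≤ (κu/(P·κℓ))·‖x − w‖₂` for
every `w ∈ S`; in particular `‖x − xt‖₂ ≤ (κu/(P·κℓ))·inf_{w ∈ S} ‖x − w‖₂`. -/
theorem stmt1
    (n nd : ℕ) (hn : 0 < n) (hnd : 0 < nd)
    (nΩ nΓ nr m : Fin nd → ℕ)
    (r : ∀ i : Fin nd, (Fin (nΩ i) → ℝ) → (Fin (nΓ i) → ℝ) → (Fin (nr i) → ℝ))
    (PΩ : ∀ i : Fin nd, Matrix (Fin (nΩ i)) (Fin n) ℝ)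
    (PΓ : ∀ i : Fin nd, Matrix (Fin (nΓ i)) (Fin n) ℝ)
    (B : ∀ i : Fin nd, Matrix (Fin (m i)) (Fin (nr i)) ℝ)
    (σΩ : ∀ i : Fin nd, Fin (nΩ i) → Fin n)
    (hσΩinj : ∀ i, Function.Injective (σΩ i))
    (hPΩrows : ∀ i q j, PΩ i q j = if j = σΩ i q then 1 else 0)
    (σΓ : ∀ i : Fin nd, Fin (nΓ i) → Fin n)
    (hσΓinj : ∀ i, Function.Injective (σΓ i))
    (hPΓrows : ∀ i q j, PΓ i q j = if j = σΓ i q then 1 else 0)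
    (S : Set (Fin n → ℝ))
    (κℓ P κu : ℝ) (hκℓ : 0 < κℓ) (hP : 0 < P) (hκu : 0 < κu)
    (hA2 : ∀ w y : Fin n → ℝ,
      Real.sqrt (∑ i, (_root_.enorm (r i ((PΩ i).mulVec w) ((PΓ i).mulVec w)
          - r i ((PΩ i).mulVec y) ((PΓ i).mulVec y))) ^ 2) ≥ κℓ * _root_.enorm (w - y))
    (hA3 : ∀ w ∈ S,
      Real.sqrt (∑ i, (_root_.enorm ((B i).mulVec (r i ((PΩ i).mulVec w) ((PΓ i).mulVec w)))) ^ 2)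
        ≥ P * Real.sqrt (∑ i, (_root_.enorm (r i ((PΩ i).mulVec w) ((PΓ i).mulVec w))) ^ 2))
    (hA4 : ∀ w y : Fin n → ℝ,
      Real.sqrt (∑ i, (_root_.enorm ((B i).mulVec (r i ((PΩ i).mulVec w) ((PΓ i).mulVec w))
          - (B i).mulVec (r i ((PΩ i).mulVec y) ((PΓ i).mulVec y)))) ^ 2)
        ≤ κu * _root_.enorm (w - y))
    (x : Fin n → ℝ)
    (hx : ∀ i, r i ((PΩ i).mulVec x) ((PΓ i).mulVec x) = 0)
    (xt : Fin n → ℝ) (hxtS : xt ∈ S)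
    (hmin : ∀ w ∈ S,
      (∑ i, (_root_.enorm ((B i).mulVec (r i ((PΩ i).mulVec xt) ((PΓ i).mulVec xt)))) ^ 2)
        ≤ ∑ i, (_root_.enorm ((B i).mulVec (r i ((PΩ i).mulVec w) ((PΓ i).mulVec w)))) ^ 2) :
    (∀ w ∈ S, _root_.enorm (x - xt) ≤ (κu / (P * κℓ)) * _root_.enorm (x - w)) ∧
      _root_.enorm (x - xt) ≤ (κu / (P * κℓ)) * sInf ((fun w => _root_.enorm (x - w)) '' S) :=
  stmt1_general n nd nΩ nΓ nr m r PΩ PΓ B S κℓ P κu hκℓ hP hκu hA2 hA3 hA4 x hx xt hxtS hmin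
end

section
/- Under assumptions A2, A3 and A4, if x is a FOM solution and x̃ ∈ S minimizes the weighted residual objective w ↦ Σ_{i=1}^{n_d} ‖B_i r_i(PΩ_i w, PΓ_i w)‖₂² over S, then for every w ∈ S: max( max_{1≤i≤n_d} ‖PΩ_i(x − x̃)‖₂ , max_{1≤j≤n_p} ‖P̄^j(x − x̃)‖₂ ) ≤ (κu·√(n_d + n_p)/(P·κℓ)) · max( max_{1≤i≤n_d} ‖PΩ_i(x − w)‖₂ , max_{1≤j≤n_p} ‖P̄^j(x − w)‖₂ ). -/
/-!
Chaining A2 (at `x`, whose residual vanishes), A3, the minimality of `xt` and A4 (at `x`) gives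
`P κℓ ‖x - xt‖ ≤ κu ‖x - w‖` in the Euclidean norm. It remains to compare the Euclidean norm with
the maximum over subdomains and ports: each block norm is at most the Euclidean norm since the
rows of a block are distinct, and since the blocks cover all coordinates,
`‖u‖² ≤ Σ (block norms)² ≤ (nd + np) · max²`.
-/

open Matrix

/-- Euclidean norm of a vector in `ℝ^d`. -/
noncomputable def enorm' {d : ℕ} (v : Fin d → ℝ) : ℝ :=
  Real.sqrt (∑ j, v j ^ 2)

lemma enorm'_eq_norm_toLp {d : ℕ} (v : Fin d → ℝ) :
    enorm' v = ‖(WithLp.toLp 2 v : EuclideanSpace ℝ (Fin d))‖ := by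
  simp [enorm', EuclideanSpace.norm_eq]

lemma enorm'_sq {d : ℕ} (v : Fin d → ℝ) : enorm' v ^ 2 = ∑ j, v j ^ 2 :=
  Real.sq_sqrt (Finset.sum_nonneg fun _ _ => sq_nonneg _)

lemma enorm'_ofLp_sub {d : ℕ} (v y : EuclideanSpace ℝ (Fin d)) :
    enorm' (v.ofLp - y.ofLp) = ‖v - y‖ := by
  rw [enorm'_eq_norm_toLp, WithLp.toLp_sub, WithLp.toLp_ofLp, WithLp.toLp_ofLp]

theorem norm_sub_le_of_weighted_residual_le {X E F : Type*} [SeminormedAddCommGroup X]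
    [SeminormedAddCommGroup E] [SeminormedAddCommGroup F] {R : X → E} {BR : X → F} {S : Set X}
    {κℓ P κu : ℝ} (hP : 0 ≤ P)
    (hA2 : ∀ w y, κℓ * ‖w - y‖ ≤ ‖R w - R y‖)
    (hA3 : ∀ w ∈ S, P * ‖R w‖ ≤ ‖BR w‖)
    (hA4 : ∀ w y, ‖BR w - BR y‖ ≤ κu * ‖w - y‖)
    {x xt w : X} (hRx : R x = 0) (hBRx : BR x = 0) (hxt : xt ∈ S) (hmin : ‖BR xt‖ ≤ ‖BR w‖) :
    P * κℓ * ‖x - xt‖ ≤ κu * ‖x - w‖ := by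
  calc P * κℓ * ‖x - xt‖ = P * (κℓ * ‖xt - x‖) := by rw [norm_sub_rev]; ring
    _ ≤ P * ‖R xt‖ := by
        gcongr
        simpa [hRx] using hA2 xt x
    _ ≤ ‖BR w‖ := (hA3 xt hxt).trans hmin
    _ ≤ κu * ‖x - w‖ := by simpa [hBRx, norm_sub_rev] using hA4 w x

/-- Block vectors in the ℓ² product of Euclidean spaces, so that the root-sum-of-squares
quantities of A2–A4 become norms. -/
noncomputable def stack {ι : Type*} {d : ι → ℕ} (f : ∀ i, Fin (d i) → ℝ) :
    PiLp 2 fun i => EuclideanSpace ℝ (Fin (d i)) :=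
  WithLp.toLp 2 fun i => WithLp.toLp 2 (f i)

lemma norm_stack {ι : Type*} [Fintype ι] {d : ι → ℕ} (f : ∀ i, Fin (d i) → ℝ) :
    ‖stack f‖ = √(∑ i, enorm' (f i) ^ 2) := by
  simp [stack, PiLp.norm_eq_of_L2, enorm'_eq_norm_toLp]

lemma norm_stack_sub {ι : Type*} [Fintype ι] {d : ι → ℕ} (f g : ∀ i, Fin (d i) → ℝ) :
    ‖stack f - stack g‖ = √(∑ i, enorm' (f i - g i) ^ 2) :=
  norm_stack (f - g)

lemma stack_zero {ι : Type*} {d : ι → ℕ} : stack (0 : ∀ i, Fin (d i) → ℝ) = 0 := rfl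

lemma mulVec_eq_comp_of_eq_ite {ι κ R : Type*} [Fintype κ] [DecidableEq κ] [NonAssocSemiring R]
    {M : Matrix ι κ R} {σ : ι → κ} (hM : ∀ q j, M q j = if j = σ q then 1 else 0) (v : κ → R) :
    M *ᵥ v = v ∘ σ := by
  funext q
  simp [mulVec, dotProduct, hM, ite_mul]

lemma enorm'_comp_le_of_injective {k d : ℕ} {σ : Fin k → Fin d} (hσ : Function.Injective σ)
    (v : Fin d → ℝ) : enorm' (v ∘ σ) ≤ enorm' v := by
  classical
  refine Real.sqrt_le_sqrt ?_
  calc ∑ q, v (σ q) ^ 2 = ∑ l ∈ Finset.univ.image σ, v l ^ 2 :=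
        (Finset.sum_image (f := fun l => v l ^ 2) fun a _ b _ h => hσ h).symm
    _ ≤ ∑ l, v l ^ 2 := Finset.sum_le_univ_sum_of_nonneg fun _ => sq_nonneg _

lemma le_finMax {k : ℕ} (hk : 0 < k) (f : Fin k → ℝ) (i : Fin k) : f i ≤ finMax hk f :=
  Finset.le_sup' f (Finset.mem_univ i)

lemma Finset.sum_le_sum_comp_of_surjective {γ α M : Type*} [Fintype γ] [Fintype α]
    [AddCommMonoid M] [Preorder M] [AddLeftMono M] {g : γ → α} (hg : Function.Surjective g)
    {f : α → M} (hf : ∀ a, 0 ≤ f a) : ∑ a, f a ≤ ∑ c, f (g c) := by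
  classical
  rw [← Finset.image_univ_of_surjective hg]
  exact Finset.sum_image_le_of_nonneg fun a _ => hf a

lemma sum_sq_le_sum_sq_blocks_of_cover {n nd np : ℕ} {nΩ : Fin nd → ℕ} {nP : Fin np → ℕ}
    {σΩ : ∀ i, Fin (nΩ i) → Fin n} {σP : ∀ j, Fin (nP j) → Fin n}
    (hcover : ∀ l : Fin n, (∃ i q, σΩ i q = l) ∨ (∃ j q, σP j q = l)) (u : Fin n → ℝ) :
    ∑ l, u l ^ 2 ≤ ∑ i, enorm' (u ∘ σΩ i) ^ 2 + ∑ j, enorm' (u ∘ σP j) ^ 2 := by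
  let g : (Σ i, Fin (nΩ i)) ⊕ (Σ j, Fin (nP j)) → Fin n :=
    Sum.elim (fun p => σΩ p.1 p.2) (fun p => σP p.1 p.2)
  have hg : Function.Surjective g := by
    intro l
    rcases hcover l with ⟨i, q, h⟩ | ⟨j, q, h⟩
    exacts [⟨.inl ⟨i, q⟩, h⟩, ⟨.inr ⟨j, q⟩, h⟩]
  calc ∑ l, u l ^ 2 ≤ ∑ c, u (g c) ^ 2 :=
        Finset.sum_le_sum_comp_of_surjective hg fun _ => sq_nonneg _
    _ = _ := by
        simp only [Fintype.sum_sum_type, Fintype.sum_sigma, g, Sum.elim_inl, Sum.elim_inr,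
          enorm'_sq, Function.comp_apply]

lemma finMax_enorm'_comp_le {k n : ℕ} (hk : 0 < k) {d : Fin k → ℕ} {σ : ∀ i, Fin (d i) → Fin n}
    (hσ : ∀ i, Function.Injective (σ i)) (v : Fin n → ℝ) :
    finMax hk (fun i => enorm' (v ∘ σ i)) ≤ enorm' v :=
  finMax_le hk fun i => enorm'_comp_le_of_injective (hσ i) v

lemma enorm'_le_sqrt_mul_max_of_cover {n nd np : ℕ} (hnd : 0 < nd) (hnp : 0 < np)
    {nΩ : Fin nd → ℕ} {nP : Fin np → ℕ}
    {σΩ : ∀ i, Fin (nΩ i) → Fin n} {σP : ∀ j, Fin (nP j) → Fin n}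
    (hcover : ∀ l : Fin n, (∃ i q, σΩ i q = l) ∨ (∃ j q, σP j q = l)) (u : Fin n → ℝ) :
    enorm' u ≤ √(nd + np) *
      max (finMax hnd fun i => enorm' (u ∘ σΩ i)) (finMax hnp fun j => enorm' (u ∘ σP j)) := by
  set M := max (finMax hnd fun i => enorm' (u ∘ σΩ i)) (finMax hnp fun j => enorm' (u ∘ σP j))
  have hΩ : ∀ i, enorm' (u ∘ σΩ i) ≤ M :=
    fun i => (le_finMax hnd (fun i => enorm' (u ∘ σΩ i)) i).trans (le_max_left _ _)
  have hport : ∀ j, enorm' (u ∘ σP j) ≤ M :=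
    fun j => (le_finMax hnp (fun j => enorm' (u ∘ σP j)) j).trans (le_max_right _ _)
  have hM : 0 ≤ M := (Real.sqrt_nonneg _).trans (hΩ ⟨0, hnd⟩)
  have hsum : ∑ l, u l ^ 2 ≤ (nd + np) * M ^ 2 := by
    calc ∑ l, u l ^ 2 ≤ ∑ i, enorm' (u ∘ σΩ i) ^ 2 + ∑ j, enorm' (u ∘ σP j) ^ 2 :=
          sum_sq_le_sum_sq_blocks_of_cover hcover u
      _ ≤ ∑ _i : Fin nd, M ^ 2 + ∑ _j : Fin np, M ^ 2 := by
          gcongr with i _ j _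
          exacts [Real.sqrt_nonneg _, hΩ i, Real.sqrt_nonneg _, hport j]
      _ = (nd + np) * M ^ 2 := by
          simp only [Finset.sum_const, Finset.card_univ, Fintype.card_fin, nsmul_eq_mul]; ring
  calc enorm' u ≤ √((nd + np) * M ^ 2) := Real.sqrt_le_sqrt hsum
    _ = √(nd + np) * M := by rw [Real.sqrt_mul (by positivity), Real.sqrt_sq hM]

theorem stmt2_general
    (n nd np : ℕ) (hnd : 0 < nd) (hnp : 0 < np)
    (nΩ nΓ nr m : Fin nd → ℕ)
    (r : ∀ i : Fin nd, (Fin (nΩ i) → ℝ) → (Fin (nΓ i) → ℝ) → (Fin (nr i) → ℝ))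
    (PΩ : ∀ i : Fin nd, Matrix (Fin (nΩ i)) (Fin n) ℝ)
    (PΓ : ∀ i : Fin nd, Matrix (Fin (nΓ i)) (Fin n) ℝ)
    (B : ∀ i : Fin nd, Matrix (Fin (m i)) (Fin (nr i)) ℝ)
    (σΩ : ∀ i : Fin nd, Fin (nΩ i) → Fin n)
    (hσΩinj : ∀ i, Function.Injective (σΩ i))
    (hPΩrows : ∀ i q j, PΩ i q j = if j = σΩ i q then 1 else 0)
    -- port extraction matrices
    (nP : Fin np → ℕ)
    (Pbar : ∀ j : Fin np, Matrix (Fin (nP j)) (Fin n) ℝ)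
    (σP : ∀ j : Fin np, Fin (nP j) → Fin n)
    (hσPinj : ∀ j, Function.Injective (σP j))
    (hPbarrows : ∀ j q l, Pbar j q l = if l = σP j q then 1 else 0)
    -- row-index sets of `PΩ₁,…,PΩ_nd, P̄¹,…,P̄^np` are pairwise disjoint and cover `{1,…,n}`
    (hcover : ∀ l : Fin n, (∃ i q, σΩ i q = l) ∨ (∃ j q, σP j q = l))
    (S : Set (Fin n → ℝ))
    (κℓ P κu : ℝ) (hκℓ : 0 < κℓ) (hP : 0 < P) (hκu : 0 < κu)
    (hA2 : ∀ w y : Fin n → ℝ,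
      Real.sqrt (∑ i, (enorm' (r i ((PΩ i).mulVec w) ((PΓ i).mulVec w)
          - r i ((PΩ i).mulVec y) ((PΓ i).mulVec y))) ^ 2) ≥ κℓ * enorm' (w - y))
    (hA3 : ∀ w ∈ S,
      Real.sqrt (∑ i, (enorm' ((B i).mulVec (r i ((PΩ i).mulVec w) ((PΓ i).mulVec w)))) ^ 2)
        ≥ P * Real.sqrt (∑ i, (enorm' (r i ((PΩ i).mulVec w) ((PΓ i).mulVec w))) ^ 2))
    (hA4 : ∀ w y : Fin n → ℝ,
      Real.sqrt (∑ i, (enorm' ((B i).mulVec (r i ((PΩ i).mulVec w) ((PΓ i).mulVec w))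
          - (B i).mulVec (r i ((PΩ i).mulVec y) ((PΓ i).mulVec y)))) ^ 2)
        ≤ κu * enorm' (w - y))
    (x : Fin n → ℝ)
    (hx : ∀ i, r i ((PΩ i).mulVec x) ((PΓ i).mulVec x) = 0)
    (xt : Fin n → ℝ) (hxtS : xt ∈ S)
    (hmin : ∀ w ∈ S,
      (∑ i, (enorm' ((B i).mulVec (r i ((PΩ i).mulVec xt) ((PΓ i).mulVec xt)))) ^ 2)
        ≤ ∑ i, (enorm' ((B i).mulVec (r i ((PΩ i).mulVec w) ((PΓ i).mulVec w)))) ^ 2) :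
    ∀ w ∈ S,
      max (finMax hnd fun i => enorm' ((PΩ i).mulVec (x - xt)))
          (finMax hnp fun j => enorm' ((Pbar j).mulVec (x - xt)))
        ≤ (κu * Real.sqrt (nd + np) / (P * κℓ)) *
          max (finMax hnd fun i => enorm' ((PΩ i).mulVec (x - w)))
              (finMax hnp fun j => enorm' ((Pbar j).mulVec (x - w))) := by
  intro w hw
  let R : EuclideanSpace ℝ (Fin n) → _ := fun v =>
    stack fun i => r i (PΩ i *ᵥ v.ofLp) (PΓ i *ᵥ v.ofLp)
  let BR : EuclideanSpace ℝ (Fin n) → _ := fun v =>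
    stack fun i => B i *ᵥ r i (PΩ i *ᵥ v.ofLp) (PΓ i *ᵥ v.ofLp)
  have hquasi : P * κℓ * enorm' (x - xt) ≤ κu * enorm' (x - w) := by
    simp only [enorm'_eq_norm_toLp, WithLp.toLp_sub]
    refine norm_sub_le_of_weighted_residual_le (R := R) (BR := BR) (S := WithLp.ofLp ⁻¹' S)
      hP.le (fun v y => ?_) (fun v hv => ?_) (fun v y => ?_)
      ((congrArg stack (funext hx)).trans stack_zero) ?_ hxtS ?_
    · simpa only [R, norm_stack_sub, enorm'_ofLp_sub] using hA2 v.ofLp y.ofLp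
    · simpa only [R, BR, norm_stack] using hA3 _ hv
    · simpa only [BR, norm_stack_sub, enorm'_ofLp_sub] using hA4 v.ofLp y.ofLp
    · simp only [BR, hx, mulVec_zero]
      exact stack_zero
    · simpa only [BR, norm_stack] using Real.sqrt_le_sqrt (hmin w hw)
  have hPΩ : ∀ i v, PΩ i *ᵥ v = v ∘ σΩ i := fun i => mulVec_eq_comp_of_eq_ite (hPΩrows i)
  have hPbar : ∀ j v, Pbar j *ᵥ v = v ∘ σP j := fun j => mulVec_eq_comp_of_eq_ite (hPbarrows j)
  simp only [hPΩ, hPbar]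
  calc _ ≤ enorm' (x - xt) :=
        max_le (finMax_enorm'_comp_le hnd hσΩinj _) (finMax_enorm'_comp_le hnp hσPinj _)
    _ ≤ κu * enorm' (x - w) / (P * κℓ) := by rw [le_div_iff₀ (by positivity)]; linarith
    _ ≤ κu * (√(nd + np) * _) / (P * κℓ) := by
        gcongr
        exact enorm'_le_sqrt_mul_max_of_cover hnd hnp hcover _
    _ = _ := by ring

/-- a priori error bound w.r.t. the ℓ∞-optimal approximation error over
subdomains and ports: under A2, A3 and A4, if `x` is a FOM solution and `xt ∈ S`
minimizes the weighted residual objective over `S`, then for every `w ∈ S`,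
`max(maxᵢ ‖PΩᵢ(x − xt)‖₂, maxⱼ ‖P̄ʲ(x − xt)‖₂)
  ≤ (κu·√(nd+np)/(P·κℓ)) · max(maxᵢ ‖PΩᵢ(x − w)‖₂, maxⱼ ‖P̄ʲ(x − w)‖₂)`. -/
theorem stmt2
    (n nd np : ℕ) (hn : 0 < n) (hnd : 0 < nd) (hnp : 0 < np)
    (nΩ nΓ nr m : Fin nd → ℕ)
    (r : ∀ i : Fin nd, (Fin (nΩ i) → ℝ) → (Fin (nΓ i) → ℝ) → (Fin (nr i) → ℝ))
    (PΩ : ∀ i : Fin nd, Matrix (Fin (nΩ i)) (Fin n) ℝ)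
    (PΓ : ∀ i : Fin nd, Matrix (Fin (nΓ i)) (Fin n) ℝ)
    (B : ∀ i : Fin nd, Matrix (Fin (m i)) (Fin (nr i)) ℝ)
    (σΩ : ∀ i : Fin nd, Fin (nΩ i) → Fin n)
    (hσΩinj : ∀ i, Function.Injective (σΩ i))
    (hPΩrows : ∀ i q j, PΩ i q j = if j = σΩ i q then 1 else 0)
    (σΓ : ∀ i : Fin nd, Fin (nΓ i) → Fin n)
    (hσΓinj : ∀ i, Function.Injective (σΓ i))
    (hPΓrows : ∀ i q j, PΓ i q j = if j = σΓ i q then 1 else 0)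
    -- port extraction matrices
    (nP : Fin np → ℕ)
    (Pbar : ∀ j : Fin np, Matrix (Fin (nP j)) (Fin n) ℝ)
    (σP : ∀ j : Fin np, Fin (nP j) → Fin n)
    (hσPinj : ∀ j, Function.Injective (σP j))
    (hPbarrows : ∀ j q l, Pbar j q l = if l = σP j q then 1 else 0)
    -- row-index sets of `PΩ₁,…,PΩ_nd, P̄¹,…,P̄^np` are pairwise disjoint and cover `{1,…,n}`
    (hdisjΩΩ : ∀ i i', i ≠ i' → Disjoint (Set.range (σΩ i)) (Set.range (σΩ i')))
    (hdisjPP : ∀ j j', j ≠ j' → Disjoint (Set.range (σP j)) (Set.range (σP j')))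
    (hdisjΩP : ∀ i j, Disjoint (Set.range (σΩ i)) (Set.range (σP j)))
    (hcover : ∀ l : Fin n, (∃ i q, σΩ i q = l) ∨ (∃ j q, σP j q = l))
    (S : Set (Fin n → ℝ))
    (κℓ P κu : ℝ) (hκℓ : 0 < κℓ) (hP : 0 < P) (hκu : 0 < κu)
    (hA2 : ∀ w y : Fin n → ℝ,
      Real.sqrt (∑ i, (enorm' (r i ((PΩ i).mulVec w) ((PΓ i).mulVec w)
          - r i ((PΩ i).mulVec y) ((PΓ i).mulVec y))) ^ 2) ≥ κℓ * enorm' (w - y))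
    (hA3 : ∀ w ∈ S,
      Real.sqrt (∑ i, (enorm' ((B i).mulVec (r i ((PΩ i).mulVec w) ((PΓ i).mulVec w)))) ^ 2)
        ≥ P * Real.sqrt (∑ i, (enorm' (r i ((PΩ i).mulVec w) ((PΓ i).mulVec w))) ^ 2))
    (hA4 : ∀ w y : Fin n → ℝ,
      Real.sqrt (∑ i, (enorm' ((B i).mulVec (r i ((PΩ i).mulVec w) ((PΓ i).mulVec w))
          - (B i).mulVec (r i ((PΩ i).mulVec y) ((PΓ i).mulVec y)))) ^ 2)
        ≤ κu * enorm' (w - y))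
    (x : Fin n → ℝ)
    (hx : ∀ i, r i ((PΩ i).mulVec x) ((PΓ i).mulVec x) = 0)
    (xt : Fin n → ℝ) (hxtS : xt ∈ S)
    (hmin : ∀ w ∈ S,
      (∑ i, (enorm' ((B i).mulVec (r i ((PΩ i).mulVec xt) ((PΓ i).mulVec xt)))) ^ 2)
        ≤ ∑ i, (enorm' ((B i).mulVec (r i ((PΩ i).mulVec w) ((PΓ i).mulVec w)))) ^ 2) :
    ∀ w ∈ S,
      max (finMax hnd fun i => enorm' ((PΩ i).mulVec (x - xt)))
          (finMax hnp fun j => enorm' ((Pbar j).mulVec (x - xt)))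
        ≤ (κu * Real.sqrt (nd + np) / (P * κℓ)) *
          max (finMax hnd fun i => enorm' ((PΩ i).mulVec (x - w)))
              (finMax hnp fun j => enorm' ((Pbar j).mulVec (x - w))) :=
  stmt2_general n nd np hnd hnp nΩ nΓ nr m r PΩ PΓ B σΩ hσΩinj hPΩrows nP Pbar σP hσPinj hPbarrows
    hcover S κℓ P κu hκℓ hP hκu hA2 hA3 hA4 x hx xt hxtS hmin
end
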